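/- arXiv:2412.01735 — 3 statements merged into one kernel-verified Lean document; each statement's English description precedes it below -/
import Mathlib

section
/- For every T ∈ B(X) and every scalar α ∈ 𝔽, T is numerical radius parallel to αI, where I is the identity operator. -/
/-!
For a functional `f` with `f x = 1`, `f ((T + c • id) x) = f (T x) + c`; choosing the unimodular
`λ` that aligns `λ α` with `f (T x)` gives `|f (T x)| + |α| ≤ v(T + λ α I)`. The map
`λ ↦ v(T + λ α I)` is Lipschitz, so it attains its maximum on the unit circle, and at a maximiser
`λ₀` every such bound holds simultaneously: `v(T) + |α| ≤ v(T + λ₀ α I)`. The reverse inequality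
is the triangle inequality for `v`.
-/

open Filter Topology

variable {𝕜 : Type*} [RCLike 𝕜] {X : Type*} [NormedAddCommGroup X] [NormedSpace 𝕜 X]

/-- The numerical radius of a bounded linear operator on a normed space:
`v(T) = sup {|x*(Tx)| : x ∈ S_X, x* ∈ J(x)}`. -/
noncomputable def nrad (T : X →L[𝕜] X) : ℝ :=
  sSup {r : ℝ | ∃ (x : X) (f : X →L[𝕜] 𝕜), ‖x‖ = 1 ∧ ‖f‖ = 1 ∧ f x = 1 ∧ r = ‖f (T x)‖}

/-- Numerical radius parallelism: `T ∥_v S`. -/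
def NRadParallel (T S : X →L[𝕜] X) : Prop :=
  ∃ lam : 𝕜, ‖lam‖ = 1 ∧ nrad (T + lam • S) = nrad T + nrad S

/-- Numerical radius Birkhoff orthogonality: `T ⊥_{vB} S`. -/
def NRadBirkhoff (T S : X →L[𝕜] X) : Prop :=
  ∀ α : 𝕜, nrad T ≤ nrad (T + α • S)

open Metric

lemma RCLike.exists_norm_eq_one_norm_add_mul (a b : 𝕜) :
    ∃ lam : 𝕜, ‖lam‖ = 1 ∧ ‖a + lam * b‖ = ‖a‖ + ‖b‖ := by
  rcases eq_or_ne a 0 with rfl | ha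
  · exact ⟨1, by simp⟩
  rcases eq_or_ne b 0 with rfl | hb
  · exact ⟨1, by simp⟩
  have ha' : (‖a‖ : 𝕜) ≠ 0 := by simpa using ha
  have hb' : (‖b‖ : 𝕜) ≠ 0 := by simpa using hb
  refine ⟨a * ‖b‖ / (‖a‖ * b), by simp [ha, hb], ?_⟩
  have : a + a * ‖b‖ / (‖a‖ * b) * b = a / ‖a‖ * ((‖a‖ + ‖b‖ : ℝ) : 𝕜) := by
    push_cast
    field_simp
  rw [this, norm_mul, RCLike.norm_ofReal, abs_of_nonneg (by positivity)]
  simp [ha]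

lemma exists_norm_one_dual_apply_eq_one [Nontrivial X] :
    ∃ (x : X) (f : X →L[𝕜] 𝕜), ‖x‖ = 1 ∧ ‖f‖ = 1 ∧ f x = 1 := by
  obtain ⟨x, hx⟩ := exists_ne (0 : X)
  have hx₁ : ‖(‖x‖⁻¹ : 𝕜) • x‖ = 1 := norm_smul_inv_norm hx
  obtain ⟨f, hf, hfx⟩ := exists_dual_vector' 𝕜 ((‖x‖⁻¹ : 𝕜) • x)
  exact ⟨_, f, hx₁, hf, by rw [hfx, hx₁, RCLike.ofReal_one]⟩

lemma norm_apply_le_nrad (T : X →L[𝕜] X) {x : X} {f : X →L[𝕜] 𝕜} (hx : ‖x‖ = 1)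
    (hf : ‖f‖ = 1) (hfx : f x = 1) : ‖f (T x)‖ ≤ nrad T := by
  refine le_csSup ⟨‖T‖, ?_⟩ ⟨x, f, hx, hf, hfx, rfl⟩
  rintro _ ⟨y, g, hy, hg, -, rfl⟩
  simpa [hy, hg] using g.le_opNorm_of_le (T.le_opNorm_of_le hy.le)

lemma nrad_le {T : X →L[𝕜] X} {c : ℝ}
    (h : ∀ (x : X) (f : X →L[𝕜] 𝕜), ‖x‖ = 1 → ‖f‖ = 1 → f x = 1 → ‖f (T x)‖ ≤ c)
    (hc : 0 ≤ c) : nrad T ≤ c :=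
  Real.sSup_le (by rintro _ ⟨x, f, hx, hf, hfx, rfl⟩; exact h x f hx hf hfx) hc

lemma nrad_nonneg (T : X →L[𝕜] X) : 0 ≤ nrad T :=
  Real.sSup_nonneg (by rintro _ ⟨x, f, -, -, -, rfl⟩; exact norm_nonneg _)

lemma nrad_of_subsingleton [Subsingleton X] (T : X →L[𝕜] X) : nrad T = 0 :=
  le_antisymm (nrad_le (fun x _ hx _ _ => by simp [Subsingleton.elim x 0] at hx) le_rfl)
    (nrad_nonneg T)

lemma nrad_add_le (T S : X →L[𝕜] X) : nrad (T + S) ≤ nrad T + nrad S := by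
  refine nrad_le (fun x f hx hf hfx => ?_) (add_nonneg (nrad_nonneg T) (nrad_nonneg S))
  rw [add_apply, map_add]
  exact (norm_add_le _ _).trans
    (add_le_add (norm_apply_le_nrad T hx hf hfx) (norm_apply_le_nrad S hx hf hfx))

lemma nrad_smul_le (c : 𝕜) (T : X →L[𝕜] X) : nrad (c • T) ≤ ‖c‖ * nrad T := by
  refine nrad_le (fun x f hx hf hfx => ?_) (mul_nonneg (norm_nonneg c) (nrad_nonneg T))
  rw [smul_apply, map_smul, norm_smul]
  exact mul_le_mul_of_nonneg_left (norm_apply_le_nrad T hx hf hfx) (norm_nonneg c)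

lemma nrad_smul_id [Nontrivial X] (α : 𝕜) : nrad (α • ContinuousLinearMap.id 𝕜 X) = ‖α‖ := by
  refine le_antisymm ((nrad_smul_le α _).trans (mul_le_of_le_one_right (norm_nonneg α) ?_)) ?_
  · exact nrad_le (fun x f _ _ hfx => by simp [hfx]) zero_le_one
  · obtain ⟨x, f, hx, hf, hfx⟩ := exists_norm_one_dual_apply_eq_one (𝕜 := 𝕜) (X := X)
    simpa [hfx] using norm_apply_le_nrad (α • ContinuousLinearMap.id 𝕜 X) hx hf hfx

lemma lipschitzWith_nrad_add_smul (T S : X →L[𝕜] X) :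
    LipschitzWith ⟨nrad S, nrad_nonneg S⟩ fun c : 𝕜 => nrad (T + c • S) := by
  refine LipschitzWith.of_le_add_mul _ fun c d => ?_
  calc nrad (T + c • S) = nrad (T + d • S + (c - d) • S) := by rw [sub_smul]; abel_nf
    _ ≤ nrad (T + d • S) + ‖c - d‖ * nrad S := by grw [nrad_add_le, nrad_smul_le]
    _ = nrad (T + d • S) + nrad S * dist c d := by rw [dist_eq_norm, mul_comm]

lemma nrad_add_norm_le_of_forall [Nontrivial X] (T : X →L[𝕜] X) (α : 𝕜) {c : ℝ}
    (h : ∀ lam : 𝕜, ‖lam‖ = 1 → nrad (T + lam • α • ContinuousLinearMap.id 𝕜 X) ≤ c) :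
    nrad T + ‖α‖ ≤ c := by
  have key : ∀ (x : X) (f : X →L[𝕜] 𝕜), ‖x‖ = 1 → ‖f‖ = 1 → f x = 1 →
      ‖f (T x)‖ + ‖α‖ ≤ c := by
    intro x f hx hf hfx
    obtain ⟨lam, hlam, halign⟩ := RCLike.exists_norm_eq_one_norm_add_mul (f (T x)) α
    calc ‖f (T x)‖ + ‖α‖ = ‖f ((T + lam • α • ContinuousLinearMap.id 𝕜 X) x)‖ := by
          simp [hfx, ← halign]
      _ ≤ c := (norm_apply_le_nrad _ hx hf hfx).trans (h lam hlam)
  obtain ⟨x, f, hx, hf, hfx⟩ := exists_norm_one_dual_apply_eq_one (𝕜 := 𝕜) (X := X)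
  have hc : 0 ≤ c - ‖α‖ := by linarith [key x f hx hf hfx, norm_nonneg (f (T x))]
  linarith [nrad_le (fun x f hx hf hfx => le_sub_iff_add_le.2 (key x f hx hf hfx)) hc]

theorem stmt2 (T : X →L[𝕜] X) (α : 𝕜) :
    NRadParallel T (α • ContinuousLinearMap.id 𝕜 X) := by
  rcases subsingleton_or_nontrivial X with hX | hX
  · exact ⟨1, norm_one, by simp [nrad_of_subsingleton]⟩
  set S := α • ContinuousLinearMap.id 𝕜 X
  obtain ⟨lam₀, hlam₀, hmax⟩ := (isCompact_sphere (0 : 𝕜) 1).exists_isMaxOn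
    (NormedSpace.sphere_nonempty.2 zero_le_one)
    (lipschitzWith_nrad_add_smul T S).continuous.continuousOn
  rw [mem_sphere_zero_iff_norm] at hlam₀
  refine ⟨lam₀, hlam₀, le_antisymm ?_ ?_⟩
  · calc nrad (T + lam₀ • S) ≤ nrad T + ‖lam₀‖ * nrad S := by grw [nrad_add_le, nrad_smul_le]
      _ = nrad T + nrad S := by rw [hlam₀, one_mul]
  · rw [nrad_smul_id]
    exact nrad_add_norm_le_of_forall T α fun lam hlam => hmax (mem_sphere_zero_iff_norm.2 hlam)
end

section
/- Let X be a finite dimensional normed space and T, S ∈ B(X). Then T ∥_v S if and only if there exist x ∈ S_X and x* ∈ J(x) such that |x*(Tx)| = v(T) and |x*(Sx)| = v(S). -/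
open Filter Topology

variable {𝕜 : Type*} [RCLike 𝕜] {X : Type*} [NormedAddCommGroup X] [NormedSpace 𝕜 X]

/-!
The value `‖x*((T + λS)x)‖` at any state `(x, x*)` is at most `‖x*(Tx)‖ + ‖x*(Sx)‖ ≤ v(T) + v(S)`,
so `v(T + λS) ≤ v(T) + v(S)` always. In finite dimension the set of states is compact, so
`v(T + λS)` is attained at some state; if it equals `v(T) + v(S)`, both inequalities are equalities
there. Conversely, at a state where `‖x*(Tx)‖ = v(T)` and `‖x*(Sx)‖ = v(S)`, choose the unimodular
`λ` that aligns the phases of `x*(Tx)` and `λ x*(Sx)`.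
-/

namespace NumericalRadius

lemma exists_norm_eq_one_mul_norm (a : 𝕜) : ∃ u : 𝕜, ‖u‖ = 1 ∧ a = u * ‖a‖ := by
  rcases eq_or_ne a 0 with rfl | ha
  · exact ⟨1, by simp, by simp⟩
  · refine ⟨a / ‖a‖, by simp [norm_div, ha], ?_⟩
    have : (‖a‖ : 𝕜) ≠ 0 := by simpa using ha
    field_simp

lemma exists_norm_eq_one_norm_add_mul (a b : 𝕜) :
    ∃ lam : 𝕜, ‖lam‖ = 1 ∧ ‖a + lam * b‖ = ‖a‖ + ‖b‖ := by
  obtain ⟨u, hu, ha⟩ := exists_norm_eq_one_mul_norm a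
  obtain ⟨v, hv, hb⟩ := exists_norm_eq_one_mul_norm b
  have hv0 : v ≠ 0 := by rintro rfl; simp at hv
  refine ⟨u / v, by simp [hu, hv], ?_⟩
  have : a + u / v * b = u * ((‖a‖ + ‖b‖ : ℝ) : 𝕜) := by
    conv_lhs => rw [ha, hb]
    push_cast
    field_simp
  rw [this, norm_mul, hu, one_mul, RCLike.norm_ofReal, abs_of_nonneg (by positivity)]

variable (𝕜 X) in
def states : Set (X × (X →L[𝕜] 𝕜)) := {p | ‖p.1‖ = 1 ∧ ‖p.2‖ = 1 ∧ p.2 p.1 = 1}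

lemma states_nonempty [Nontrivial X] : (states 𝕜 X).Nonempty := by
  obtain ⟨⟨x, hx⟩⟩ := NormedSpace.sphere_nonempty_rclike 𝕜 (E := X) zero_le_one
  rw [mem_sphere_zero_iff_norm] at hx
  obtain ⟨f, hf, hfx⟩ := exists_dual_vector 𝕜 x (by simp [hx])
  exact ⟨(x, f), hx, hf, by simp [hfx, hx]⟩

lemma isCompact_states [FiniteDimensional 𝕜 X] : IsCompact (states 𝕜 X) := by
  have hstates : states 𝕜 X =
      Metric.sphere 0 1 ×ˢ Metric.sphere 0 1 ∩ {p : X × (X →L[𝕜] 𝕜) | p.2 p.1 = 1} := by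
    ext p
    simp [states, and_assoc]
  have := FiniteDimensional.proper 𝕜 X
  have := FiniteDimensional.proper 𝕜 (X →L[𝕜] 𝕜)
  rw [hstates]
  exact (isCompact_sphere _ _).prod (isCompact_sphere _ _) |>.inter_right <|
    isClosed_eq (by fun_prop) continuous_const

lemma nrad_eq_sSup_image (T : X →L[𝕜] X) :
    nrad T = sSup ((fun p : X × (X →L[𝕜] 𝕜) => ‖p.2 (T p.1)‖) '' states 𝕜 X) := by
  unfold nrad states
  congr 1
  ext r
  simp only [Set.mem_ofPred_eq, Set.mem_image, Prod.exists]
  grind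

lemma bddAbove_image_states (T : X →L[𝕜] X) :
    BddAbove ((fun p : X × (X →L[𝕜] 𝕜) => ‖p.2 (T p.1)‖) '' states 𝕜 X) := by
  refine ⟨‖T‖, ?_⟩
  rintro _ ⟨⟨x, f⟩, ⟨hx, hf, -⟩, rfl⟩
  simpa [hx, hf] using f.le_opNorm_of_le (T.le_opNorm_of_le hx.le)

lemma norm_apply_le_nrad (T : X →L[𝕜] X) {x : X} {f : X →L[𝕜] 𝕜}
    (hx : ‖x‖ = 1) (hf : ‖f‖ = 1) (hfx : f x = 1) : ‖f (T x)‖ ≤ nrad T := by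
  rw [nrad_eq_sSup_image]
  exact le_csSup (bddAbove_image_states T) ⟨(x, f), ⟨hx, hf, hfx⟩, rfl⟩

lemma exists_norm_apply_eq_nrad [FiniteDimensional 𝕜 X] [Nontrivial X] (T : X →L[𝕜] X) :
    ∃ (x : X) (f : X →L[𝕜] 𝕜), ‖x‖ = 1 ∧ ‖f‖ = 1 ∧ f x = 1 ∧ ‖f (T x)‖ = nrad T := by
  obtain ⟨⟨x, f⟩, hp, hmax⟩ := isCompact_states.exists_isMaxOn states_nonempty
    (f := fun p : X × (X →L[𝕜] 𝕜) => ‖p.2 (T p.1)‖) (by fun_prop)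
  refine ⟨x, f, hp.1, hp.2.1, hp.2.2, ?_⟩
  rw [nrad_eq_sSup_image, eq_comm]
  exact IsGreatest.csSup_eq ⟨⟨(x, f), hp, rfl⟩, Set.forall_mem_image.2 fun _ hq => hmax hq⟩

lemma norm_apply_add_smul_le (T S : X →L[𝕜] X) {lam : 𝕜} (hlam : ‖lam‖ = 1)
    (x : X) (f : X →L[𝕜] 𝕜) : ‖f ((T + lam • S) x)‖ ≤ ‖f (T x)‖ + ‖f (S x)‖ := by
  simpa [norm_smul, hlam] using norm_add_le (f (T x)) (lam • f (S x))

lemma nrad_add_smul_le [Nontrivial X] (T S : X →L[𝕜] X) {lam : 𝕜} (hlam : ‖lam‖ = 1) :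
    nrad (T + lam • S) ≤ nrad T + nrad S := by
  rw [nrad_eq_sSup_image]
  refine csSup_le (states_nonempty.image _) (Set.forall_mem_image.2 ?_)
  rintro ⟨x, f⟩ ⟨hx, hf, hfx⟩
  exact (norm_apply_add_smul_le T S hlam x f).trans
    (add_le_add (norm_apply_le_nrad T hx hf hfx) (norm_apply_le_nrad S hx hf hfx))

lemma exists_state_of_nradParallel [FiniteDimensional 𝕜 X] [Nontrivial X] {T S : X →L[𝕜] X}
    (h : NRadParallel T S) :
    ∃ (x : X) (f : X →L[𝕜] 𝕜), ‖x‖ = 1 ∧ ‖f‖ = 1 ∧ f x = 1 ∧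
      ‖f (T x)‖ = nrad T ∧ ‖f (S x)‖ = nrad S := by
  obtain ⟨lam, hlam, hsum⟩ := h
  obtain ⟨x, f, hx, hf, hfx, hmax⟩ := exists_norm_apply_eq_nrad (T + lam • S)
  have hT := norm_apply_le_nrad T hx hf hfx
  have hS := norm_apply_le_nrad S hx hf hfx
  have := norm_apply_add_smul_le T S hlam x f
  exact ⟨x, f, hx, hf, hfx, by linarith, by linarith⟩

lemma nradParallel_of_exists_state {T S : X →L[𝕜] X}
    (h : ∃ (x : X) (f : X →L[𝕜] 𝕜), ‖x‖ = 1 ∧ ‖f‖ = 1 ∧ f x = 1 ∧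
      ‖f (T x)‖ = nrad T ∧ ‖f (S x)‖ = nrad S) :
    NRadParallel T S := by
  obtain ⟨x, f, hx, hf, hfx, hT, hS⟩ := h
  have : Nontrivial X := ⟨⟨x, 0, by rintro rfl; simp at hx⟩⟩
  obtain ⟨lam, hlam, hsum⟩ := exists_norm_eq_one_norm_add_mul (f (T x)) (f (S x))
  refine ⟨lam, hlam, (nrad_add_smul_le T S hlam).antisymm ?_⟩
  calc nrad T + nrad S = ‖f (T x) + lam * f (S x)‖ := by rw [hsum, hT, hS]
    _ = ‖f ((T + lam • S) x)‖ := by simp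
    _ ≤ nrad (T + lam • S) := norm_apply_le_nrad _ hx hf hfx

end NumericalRadius

open NumericalRadius in
theorem stmt7 [FiniteDimensional 𝕜 X] (hdim : 2 ≤ Module.rank 𝕜 X)
    (T S : X →L[𝕜] X) :
    NRadParallel T S ↔
      ∃ (x : X) (f : X →L[𝕜] 𝕜), ‖x‖ = 1 ∧ ‖f‖ = 1 ∧ f x = 1 ∧
        ‖f (T x)‖ = nrad T ∧ ‖f (S x)‖ = nrad S := by
  have : Nontrivial X := rank_pos_iff_nontrivial.1 (lt_of_lt_of_le (by norm_num) hdim)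
  exact ⟨exists_state_of_nradParallel, nradParallel_of_exists_state⟩
end

section
/- Let x, y ∈ X, x* ∈ J(x) and y* ∈ J(y). If the rank-one operators x*(·)x and y*(·)y are numerical radius parallel, then x is norm parallel to y, i.e., ‖x + λy‖ = ‖x‖ + ‖y‖ for some unimodular λ. -/
/-!
For every unit vector `u` and norming functional `k`, the value `k ((x*(·)x + λ y*(·)y) u)` has
modulus at most `|k x| + |k y|`, and a suitable unimodular `μ` (aligning the phases of `k x` and
`μ k y`) turns this into `|k (x + μ y)| ≤ ‖x + μ y‖`. Hence the numerical radius of the sum is at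
most the maximum of `‖x + μ y‖` over the (compact) unit circle, while parallelism makes it equal to
`v(x*(·)x) + v(y*(·)y) ≥ ‖x‖ + ‖y‖`. So the maximizing `μ` satisfies `‖x + μ y‖ = ‖x‖ + ‖y‖`.
-/

open Filter Topology

variable {𝕜 : Type*} [RCLike 𝕜] {X : Type*} [NormedAddCommGroup X] [NormedSpace 𝕜 X]

theorem RCLike.exists_norm_add_mul_eq (p q : 𝕜) : ∃ μ : 𝕜, ‖μ‖ = 1 ∧ ‖p + μ * q‖ = ‖p‖ + ‖q‖ := by
  by_cases hp : p = 0
  · exact ⟨1, by simp, by simp [hp]⟩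
  by_cases hq : q = 0
  · exact ⟨1, by simp, by simp [hq]⟩
  have hnp : (‖p‖ : 𝕜) ≠ 0 := by simpa using hp
  refine ⟨p / ‖p‖ * (‖q‖ / q), by simp [norm_ne_zero_iff.mpr hp, norm_ne_zero_iff.mpr hq], ?_⟩
  have key : p + p / ‖p‖ * (‖q‖ / q) * q = p / ‖p‖ * ((‖p‖ + ‖q‖ : ℝ) : 𝕜) := by
    push_cast
    field_simp
  rw [key, norm_mul, RCLike.norm_ofReal, abs_of_nonneg (by positivity)]
  simp [norm_ne_zero_iff.mpr hp]

theorem le_nrad (T : X →L[𝕜] X) {u : X} {k : X →L[𝕜] 𝕜} (hu : ‖u‖ = 1) (hk : ‖k‖ = 1)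
    (hku : k u = 1) : ‖k (T u)‖ ≤ nrad T := by
  refine le_csSup ⟨‖T‖, ?_⟩ ⟨u, k, hu, hk, hku, rfl⟩
  rintro _ ⟨v, l, hv, hl, -, rfl⟩
  calc ‖l (T v)‖ ≤ ‖T v‖ := by simpa [hl] using l.le_opNorm (T v)
    _ ≤ ‖T‖ := by simpa [hv] using T.le_opNorm v

theorem nrad_le_s10 {T : X →L[𝕜] X} {M : ℝ} (hM : 0 ≤ M)
    (h : ∀ (u : X) (k : X →L[𝕜] 𝕜), ‖u‖ = 1 → ‖k‖ = 1 → ‖k (T u)‖ ≤ M) : nrad T ≤ M :=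
  Real.sSup_le (by rintro _ ⟨u, k, hu, hk, -, rfl⟩; exact h u k hu hk) hM

theorem norm_le_nrad_smulRight {x : X} {f : X →L[𝕜] 𝕜} (hf : ‖f‖ = 1)
    (hfx : f x = (‖x‖ : 𝕜)) : ‖x‖ ≤ nrad (f.smulRight x) := by
  by_cases hx : x = 0
  · simp only [hx, norm_zero]
    exact Real.sSup_nonneg fun _ ⟨_, _, _, _, _, hr⟩ => hr ▸ norm_nonneg _
  have hnx : (‖x‖ : 𝕜) ≠ 0 := by simpa using hx
  have hu : ‖(‖x‖ : 𝕜)⁻¹ • x‖ = 1 := by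
    simp [norm_smul, norm_ne_zero_iff.mpr hx]
  have hfu : f ((‖x‖ : 𝕜)⁻¹ • x) = 1 := by
    rw [map_smul, hfx, smul_eq_mul, inv_mul_cancel₀ hnx]
  have hTu : f ((f.smulRight x) ((‖x‖ : 𝕜)⁻¹ • x)) = (‖x‖ : 𝕜) := by
    rw [ContinuousLinearMap.smulRight_apply, hfu, one_smul, hfx]
  have := le_nrad (f.smulRight x) hu hf hfu
  rwa [hTu, RCLike.norm_ofReal, abs_norm] at this

theorem nrad_smulRight_add_smul_le {x y : X} {f g : X →L[𝕜] 𝕜} {lam : 𝕜} {M : ℝ}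
    (hf : ‖f‖ ≤ 1) (hg : ‖g‖ ≤ 1) (hlam : ‖lam‖ ≤ 1)
    (hM : ∀ μ : 𝕜, ‖μ‖ = 1 → ‖x + μ • y‖ ≤ M) :
    nrad (f.smulRight x + lam • g.smulRight y) ≤ M := by
  refine nrad_le_s10 ((norm_nonneg _).trans (hM 1 norm_one)) fun u k hu hk => ?_
  obtain ⟨μ, hμ, hkμ⟩ := RCLike.exists_norm_add_mul_eq (k x) (k y)
  have hfu : ‖f u‖ ≤ 1 := (f.le_opNorm u).trans (by rwa [hu, mul_one])
  have hgu : ‖g u‖ ≤ 1 := (g.le_opNorm u).trans (by rwa [hu, mul_one])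
  calc ‖k ((f.smulRight x + lam • g.smulRight y) u)‖
      = ‖f u * k x + lam * (g u * k y)‖ := by simp
    _ ≤ ‖f u‖ * ‖k x‖ + ‖lam‖ * (‖g u‖ * ‖k y‖) := by
      simpa only [norm_mul] using norm_add_le (f u * k x) (lam * (g u * k y))
    _ ≤ 1 * ‖k x‖ + 1 * (1 * ‖k y‖) := by gcongr
    _ = ‖k (x + μ • y)‖ := by simp [hkμ]
    _ ≤ ‖x + μ • y‖ := by simpa [hk] using k.le_opNorm (x + μ • y)
    _ ≤ M := hM μ hμ

theorem stmt10 (x y : X) (f g : X →L[𝕜] 𝕜)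
    (hf1 : ‖f‖ = 1) (hfx : f x = (‖x‖ : 𝕜))
    (hg1 : ‖g‖ = 1) (hgy : g y = (‖y‖ : 𝕜))
    (h : NRadParallel (f.smulRight x) (g.smulRight y)) :
    ∃ lam : 𝕜, ‖lam‖ = 1 ∧ ‖x + lam • y‖ = ‖x‖ + ‖y‖ := by
  obtain ⟨lam, hlam, hsum⟩ := h
  obtain ⟨μ, hμ, hmax⟩ := (isCompact_sphere (0 : 𝕜) 1).exists_isMaxOn ⟨1, by simp⟩
    (f := fun μ : 𝕜 => ‖x + μ • y‖)
    (continuous_const.add (continuous_id.smul continuous_const)).norm.continuousOn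
  have hμ1 : ‖μ‖ = 1 := mem_sphere_zero_iff_norm.mp hμ
  refine ⟨μ, hμ1, le_antisymm ?_ ?_⟩
  · simpa [norm_smul, hμ1] using norm_add_le x (μ • y)
  calc ‖x‖ + ‖y‖
      ≤ nrad (f.smulRight x) + nrad (g.smulRight y) :=
        add_le_add (norm_le_nrad_smulRight hf1 hfx) (norm_le_nrad_smulRight hg1 hgy)
    _ = nrad (f.smulRight x + lam • g.smulRight y) := hsum.symm
    _ ≤ ‖x + μ • y‖ := nrad_smulRight_add_smul_le hf1.le hg1.le hlam.le
        fun ν hν => hmax (mem_sphere_zero_iff_norm.mpr hν)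
end
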